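/- Let Ω = [-π,π]² ⊂ ℝ², D > 0, and let G : ℝ² → ℝ be continuous and 2π-periodic with ‖G‖_∞ := sup_{x ∈ Ω} |G(x)| < 2. Suppose e : ℝ² × ℝ → ℝ is 2π-periodic in x, continuously differentiable, has zero spatial mean ∫_Ω e(x,t) dx = 0 for all t, and its energy V(t) = ∫_Ω e(x,t)² dx satisfies V'(t) = -D·∫_Ω e(x,t)²·G(x) dx - 2D·∫_Ω ‖∇_x e(x,t)‖² dx. Then V'(t) ≤ -D·(2 - ‖G‖_∞)·V(t) for all t ≥ 0, and hence V(t) ≤ V(0)·exp(-D·(2 - ‖G‖_∞)·t). -/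

import Mathlib

/-!
The energy identity gives `V' = -D ∫ e² G - 2D ∫ ‖∇e‖²`. The first integral is at least
`-‖G‖_∞ V`, and the second is at least `V` by the Poincaré inequality for zero-mean periodic
functions on `[-π, π]²`; hence `V' ≤ -D (2 - ‖G‖_∞) V`, and `V(t) e^{D (2 - ‖G‖_∞) t}` is
antitone.

The Poincaré inequality is reduced to Wirtinger's inequality `∫ f² ≤ ∫ f'²` in one variable,
which follows from Parseval's identity since integration by parts multiplies the `n`-th Fourier
coefficient by `i n`. Applying the one-dimensional inequality in `t` to the slices `u(s, ·)`
bounds `∫ u²` by `∫ (∂₁u)²` plus `(2π)⁻¹ ∫ M²`, where `M(s) = ∫ u(s, t) dt`; and `M` is itself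
periodic with zero mean and `M' = ∫ ∂₀u(s, t) dt`, so Wirtinger and Cauchy–Schwarz bound
`∫ M²` by `2π ∫ (∂₀u)²`.
-/

open MeasureTheory Real Filter

noncomputable section

/-- The plane `ℝ²`, modeled as functions `Fin 2 → ℝ`. -/
abbrev Vec2 := Fin 2 → ℝ

/-- Partial derivative of a scalar field in the `i`-th coordinate direction. -/
def pderiv2 (i : Fin 2) (f : Vec2 → ℝ) (x : Vec2) : ℝ :=
  fderiv ℝ f x (Pi.single i 1)

/-- Divergence of a vector field on `ℝ²` (trace of the Fréchet derivative). -/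
def div2 (F : Vec2 → Vec2) (x : Vec2) : ℝ :=
  ∑ i, fderiv ℝ F x (Pi.single i 1) i

/-- Gradient of a scalar field on `ℝ²`. -/
def grad2 (f : Vec2 → ℝ) (x : Vec2) : Vec2 :=
  fun i => pderiv2 i f x

/-- Laplacian of a scalar field on `ℝ²`. -/
def lap2 (f : Vec2 → ℝ) (x : Vec2) : ℝ :=
  ∑ i, pderiv2 i (pderiv2 i f) x

/-- `2π`-periodicity in both coordinates: `g (x + 2πk) = g x` for all `k ∈ ℤ²`. -/
def Per2 {E : Type*} (g : Vec2 → E) : Prop :=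
  ∀ (x : Vec2) (k : Fin 2 → ℤ), g (x + fun i => 2 * π * (k i : ℝ)) = g x

/-- The periodic square `Ω = [-π, π]²`. -/
def Omega2 : Set Vec2 := Set.Icc (fun _ => -π) (fun _ => π)

open Set

lemma memLp_two_restrict_Ioc_of_continuousOn {a b : ℝ} {f : ℝ → ℂ}
    (hf : ContinuousOn f (Icc a b)) : MemLp f 2 (volume.restrict (Ioc a b)) := by
  rw [memLp_two_iff_integrable_sq_norm
    ((hf.mono Ioc_subset_Icc_self).aestronglyMeasurable (μ := volume) measurableSet_Ioc)]
  exact (hf.norm.pow 2).integrableOn_Icc.mono_set Ioc_subset_Icc_self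

open Complex in
lemma norm_fourierCoeffOn_le_of_hasDerivAt {a b : ℝ} (hab : a < b) {f f' : ℝ → ℂ}
    (hf : ∀ x ∈ uIcc a b, HasDerivAt f (f' x) x) (hf' : IntervalIntegrable f' volume a b)
    (hfab : f a = f b) (hmean : ∫ x in a..b, f x = 0) (n : ℤ) :
    ‖fourierCoeffOn hab f n‖ ≤ (b - a) / (2 * π) * ‖fourierCoeffOn hab f' n‖ := by
  rcases eq_or_ne n 0 with rfl | hn
  · simp only [fourierCoeffOn_eq_integral, neg_zero, fourier_zero, one_smul, hmean, smul_zero,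
      norm_zero]
    have := sub_pos.2 hab
    positivity
  have hn1 : (1 : ℝ) ≤ |(n : ℝ)| := by exact_mod_cast Int.one_le_abs hn
  rw [fourierCoeffOn_of_hasDerivAt hab hn hf hf', hfab, sub_self, mul_zero, zero_sub, ← ofReal_sub]
  simp only [norm_mul, norm_neg, norm_div, norm_one, Complex.norm_ofNat, norm_real,
    Real.norm_of_nonneg pi_pos.le, Real.norm_of_nonneg (sub_pos.2 hab).le, norm_I, mul_one,
    norm_intCast]
  rw [one_div_mul_eq_div, div_mul_eq_mul_div]
  exact div_le_div_of_nonneg_left (by have := sub_pos.2 hab; positivity) (by positivity)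
    (le_mul_of_one_le_right (by positivity) hn1)

lemma intervalIntegral_sq_le_of_integral_eq_zero {a b : ℝ} (hab : a < b) {f f' : ℝ → ℝ}
    (hf : ∀ x ∈ Icc a b, HasDerivAt f (f' x) x) (hf' : ContinuousOn f' (Icc a b))
    (hfab : f a = f b) (hmean : ∫ x in a..b, f x = 0) :
    ∫ x in a..b, f x ^ 2 ≤ ((b - a) / (2 * π)) ^ 2 * ∫ x in a..b, f' x ^ 2 := by
  set F : ℝ → ℂ := fun x => f x
  set F' : ℝ → ℂ := fun x => f' x
  have hF : ∀ x ∈ Icc a b, HasDerivAt F (F' x) x := fun x hx => (hf x hx).ofReal_comp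
  have hFc : ContinuousOn F (Icc a b) := fun x hx => (hF x hx).continuousAt.continuousWithinAt
  have hF'c : ContinuousOn F' (Icc a b) := Complex.continuous_ofReal.comp_continuousOn hf'
  have hcoeff (n : ℤ) : ‖fourierCoeffOn hab F n‖ ^ 2 ≤
      ((b - a) / (2 * π)) ^ 2 * ‖fourierCoeffOn hab F' n‖ ^ 2 := by
    rw [← mul_pow]
    gcongr
    refine norm_fourierCoeffOn_le_of_hasDerivAt hab (by rwa [uIcc_of_le hab.le]) ?_
      (by simp [F, hfab]) (by simp [F, intervalIntegral.integral_ofReal, hmean]) n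
    exact hF'c.intervalIntegrable_of_Icc hab.le
  have parseval := hasSum_le hcoeff
    (hasSum_sq_fourierCoeffOn hab (memLp_two_restrict_Ioc_of_continuousOn hFc))
    ((hasSum_sq_fourierCoeffOn hab (memLp_two_restrict_Ioc_of_continuousOn hF'c)).mul_left _)
  simp only [F, F', Complex.norm_real, Real.norm_eq_abs, sq_abs, smul_eq_mul] at parseval
  rw [mul_left_comm] at parseval
  exact le_of_mul_le_mul_left parseval (inv_pos.2 (sub_pos.2 hab))

lemma intervalIntegral_sq_eq_integral_sub_average_sq_add {a b : ℝ} (hab : a < b) {f : ℝ → ℝ}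
    (hf : ContinuousOn f (Icc a b)) :
    ∫ x in a..b, f x ^ 2 =
      (∫ x in a..b, (f x - (∫ y in a..b, f y) / (b - a)) ^ 2) +
        (∫ x in a..b, f x) ^ 2 / (b - a) := by
  set m := (∫ y in a..b, f y) / (b - a)
  have hint : ∫ x in a..b, f x = (b - a) * m := by
    rw [mul_div_cancel₀ _ (sub_pos.2 hab).ne']
  have hexpand (x : ℝ) : (f x - m) ^ 2 = f x ^ 2 - 2 * m * f x + m ^ 2 := by ring
  simp_rw [hexpand]
  rw [intervalIntegral.integral_add, intervalIntegral.integral_sub,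
    intervalIntegral.integral_const_mul, intervalIntegral.integral_const, hint, smul_eq_mul]
  · field_simp [(sub_pos.2 hab).ne']
    ring
  · exact (hf.pow 2).intervalIntegrable_of_Icc hab.le
  · exact (continuousOn_const.mul hf).intervalIntegrable_of_Icc hab.le
  · exact ((hf.pow 2).sub (continuousOn_const.mul hf)).intervalIntegrable_of_Icc hab.le
  · exact intervalIntegrable_const

lemma sq_intervalIntegral_le {a b : ℝ} (hab : a < b) {f : ℝ → ℝ} (hf : ContinuousOn f (Icc a b)) :
    (∫ x in a..b, f x) ^ 2 ≤ (b - a) * ∫ x in a..b, f x ^ 2 := by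
  have hvar := intervalIntegral.integral_nonneg (μ := volume) hab.le fun x _ =>
    sq_nonneg (f x - (∫ y in a..b, f y) / (b - a))
  rw [← div_le_iff₀' (sub_pos.2 hab), intervalIntegral_sq_eq_integral_sub_average_sq_add hab hf]
  linarith

lemma intervalIntegral_sq_le_of_hasDerivAt {a b : ℝ} (hab : a < b) {f f' : ℝ → ℝ}
    (hf : ∀ x ∈ Icc a b, HasDerivAt f (f' x) x) (hf' : ContinuousOn f' (Icc a b))
    (hfab : f a = f b) :
    ∫ x in a..b, f x ^ 2 ≤
      ((b - a) / (2 * π)) ^ 2 * (∫ x in a..b, f' x ^ 2) + (∫ x in a..b, f x) ^ 2 / (b - a) := by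
  set m := (∫ y in a..b, f y) / (b - a)
  have hfc : ContinuousOn f (Icc a b) := fun x hx => (hf x hx).continuousAt.continuousWithinAt
  have hmean : ∫ x in a..b, (f x - m) = 0 := by
    rw [intervalIntegral.integral_sub (hfc.intervalIntegrable_of_Icc hab.le)
      intervalIntegrable_const, intervalIntegral.integral_const, smul_eq_mul,
      mul_div_cancel₀ _ (sub_pos.2 hab).ne', sub_self]
  have hwirtinger := intervalIntegral_sq_le_of_integral_eq_zero hab
    (fun x hx => (hf x hx).sub_const m) hf' (by rw [hfab]) hmean
  rw [intervalIntegral_sq_eq_integral_sub_average_sq_add hab hfc]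
  linarith

theorem hasDerivAt_intervalIntegral_of_continuous {E : Type*} [NormedAddCommGroup E]
    [NormedSpace ℝ E] {F F' : ℝ → ℝ → E} (hF : ∀ x, Continuous (F x))
    (hF' : Continuous (Function.uncurry F')) (hderiv : ∀ x t, HasDerivAt (F · t) (F' x t) x)
    (a b x₀ : ℝ) :
    HasDerivAt (fun x => ∫ t in a..b, F x t) (∫ t in a..b, F' x₀ t) x₀ := by
  obtain ⟨C, hC⟩ := (isCompact_closedBall x₀ 1 |>.prod isCompact_uIcc).exists_bound_of_continuousOn
    hF'.continuousOn
  refine (intervalIntegral.hasDerivAt_integral_of_dominated_loc_of_deriv_le (bound := fun _ => C)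
    (Metric.ball_mem_nhds x₀ one_pos) (Eventually.of_forall fun x => (hF x).aestronglyMeasurable)
    ((hF x₀).intervalIntegrable _ _) (hF'.comp (Continuous.prodMk_right x₀)).aestronglyMeasurable
    ?_ intervalIntegrable_const (Eventually.of_forall fun t _ x _ => hderiv x t)).2
  exact Eventually.of_forall fun t ht x hx =>
    hC (x, t) ⟨Metric.ball_subset_closedBall hx, uIoc_subset_uIcc ht⟩

lemma setIntegral_Icc_fin_two {E : Type*} [NormedAddCommGroup E] [NormedSpace ℝ E]
    {a b : Fin 2 → ℝ} (hab : a ≤ b) {f : (Fin 2 → ℝ) → E} (hf : IntegrableOn f (Icc a b)) :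
    ∫ x in Icc a b, f x = ∫ s in a 0..b 0, ∫ t in a 1..b 1, f ![s, t] := by
  have hpre : MeasurableEquiv.finTwoArrow.symm ⁻¹' Icc a b =
      Icc (a 0) (b 0) ×ˢ Icc (a 1) (b 1) := by
    ext p
    simp [MeasurableEquiv.finTwoArrow, MeasurableEquiv.piFinTwo, Pi.le_def, Fin.forall_fin_two,
      Prod.le_def]
  have hmp := (volume_preserving_finTwoArrow ℝ).symm
  rw [← hmp.setIntegral_preimage_emb (MeasurableEquiv.measurableEmbedding _), hpre,
    Measure.volume_eq_prod, setIntegral_prod, intervalIntegral.integral_of_le (hab 0),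
    ← integral_Icc_eq_integral_Ioc]
  · refine setIntegral_congr_fun measurableSet_Icc fun s _ => ?_
    rw [intervalIntegral.integral_of_le (hab 1), ← integral_Icc_eq_integral_Ioc]
    rfl
  · rw [← Measure.volume_eq_prod, ← hpre]
    exact (hmp.integrableOn_comp_preimage (MeasurableEquiv.measurableEmbedding _)).2 hf

lemma hasDerivAt_vecCons_fst (s t : ℝ) :
    HasDerivAt (fun s : ℝ => (![s, t] : Fin 2 → ℝ)) (Pi.single 0 1) s := by
  rw [hasDerivAt_pi]
  intro i
  fin_cases i
  · simpa using hasDerivAt_id' s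
  · simpa using hasDerivAt_const s t

lemma hasDerivAt_vecCons_snd (s t : ℝ) :
    HasDerivAt (fun t : ℝ => (![s, t] : Fin 2 → ℝ)) (Pi.single 1 1) t := by
  rw [hasDerivAt_pi]
  intro i
  fin_cases i
  · simpa using hasDerivAt_const t s
  · simpa using hasDerivAt_id' t

lemma hasDerivAt_pderiv2_zero {u : Vec2 → ℝ} (hu : Differentiable ℝ u) (s t : ℝ) :
    HasDerivAt (fun s => u ![s, t]) (pderiv2 0 u ![s, t]) s :=
  (hu _).hasFDerivAt.comp_hasDerivAt s (hasDerivAt_vecCons_fst s t)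

lemma hasDerivAt_pderiv2_one {u : Vec2 → ℝ} (hu : Differentiable ℝ u) (s t : ℝ) :
    HasDerivAt (fun t => u ![s, t]) (pderiv2 1 u ![s, t]) t :=
  (hu _).hasFDerivAt.comp_hasDerivAt t (hasDerivAt_vecCons_snd s t)

lemma ContDiff.continuous_pderiv2 {u : Vec2 → ℝ} (hu : ContDiff ℝ 1 u) (i : Fin 2) :
    Continuous (pderiv2 i u) :=
  (hu.continuous_fderiv one_ne_zero).clm_apply continuous_const

lemma Per2.vecCons_add_two_pi_fst {E : Type*} {g : Vec2 → E} (hg : Per2 g) (s t : ℝ) :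
    g ![s + 2 * π, t] = g ![s, t] := by
  convert hg ![s, t] ![1, 0] using 2
  ext i
  fin_cases i <;> simp

lemma Per2.vecCons_add_two_pi_snd {E : Type*} {g : Vec2 → E} (hg : Per2 g) (s t : ℝ) :
    g ![s, t + 2 * π] = g ![s, t] := by
  convert hg ![s, t] ![0, 1] using 2
  ext i
  fin_cases i <;> simp

lemma setIntegral_Omega2 {g : Vec2 → ℝ} (hg : Continuous g) :
    ∫ x in Omega2, g x = ∫ s in -π..π, ∫ t in -π..π, g ![s, t] :=
  setIntegral_Icc_fin_two (fun _ => by linarith [pi_pos]) hg.integrableOn_Icc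

lemma continuous_intervalIntegral_vecCons {g : Vec2 → ℝ} (hg : Continuous g) (a b : ℝ) :
    Continuous fun s => ∫ t in a..b, g ![s, t] :=
  intervalIntegral.continuous_parametric_intervalIntegral_of_continuous'
    (f := fun s t => g ![s, t]) (by fun_prop) a b

lemma intervalIntegral_slice_sq_le {u : Vec2 → ℝ} (hu : ContDiff ℝ 1 u) (hper : Per2 u) (s : ℝ) :
    ∫ t in -π..π, u ![s, t] ^ 2 ≤
      (∫ t in -π..π, pderiv2 1 u ![s, t] ^ 2) + (∫ t in -π..π, u ![s, t]) ^ 2 / (2 * π) := by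
  have := hu.continuous_pderiv2 1
  simpa [show π - -π = 2 * π by ring, pi_ne_zero] using
    intervalIntegral_sq_le_of_hasDerivAt (show -π < π by linarith [pi_pos])
      (fun t _ => hasDerivAt_pderiv2_one (hu.differentiable one_ne_zero) s t)
      (Continuous.continuousOn (by fun_prop))
      (by rw [← hper.vecCons_add_two_pi_snd s (-π)]; ring_nf)

lemma intervalIntegral_sq_intervalIntegral_slice_le {u : Vec2 → ℝ} (hu : ContDiff ℝ 1 u)
    (hper : Per2 u) (hmean : ∫ x in Omega2, u x = 0) :
    ∫ s in -π..π, (∫ t in -π..π, u ![s, t]) ^ 2 ≤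
      2 * π * ∫ s in -π..π, ∫ t in -π..π, pderiv2 0 u ![s, t] ^ 2 := by
  have hπ : -π < π := by linarith [pi_pos]
  have hlen : π - -π = 2 * π := by ring
  have hd0 := hu.continuous_pderiv2 0
  set M := fun s => ∫ t in -π..π, u ![s, t]
  set M' := fun s => ∫ t in -π..π, pderiv2 0 u ![s, t]
  have hM : ∀ s, HasDerivAt M (M' s) s :=
    hasDerivAt_intervalIntegral_of_continuous (F' := fun s t => pderiv2 0 u ![s, t])
      (fun s => hu.continuous.comp (by fun_prop)) (by fun_prop)
      (hasDerivAt_pderiv2_zero (hu.differentiable one_ne_zero)) _ _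
  have hM'c : Continuous M' := continuous_intervalIntegral_vecCons hd0 _ _
  have hMper : M (-π) = M π := by
    simp only [M, ← hper.vecCons_add_two_pi_fst (-π)]
    ring_nf
  have hMmean : ∫ s in -π..π, M s = 0 := by rw [← setIntegral_Omega2 hu.continuous, hmean]
  have hM'_le (s : ℝ) : M' s ^ 2 ≤ 2 * π * ∫ t in -π..π, pderiv2 0 u ![s, t] ^ 2 := by
    simpa [hlen] using sq_intervalIntegral_le hπ (Continuous.continuousOn (by fun_prop))
  rw [← intervalIntegral.integral_const_mul]
  calc ∫ s in -π..π, M s ^ 2 ≤ ∫ s in -π..π, M' s ^ 2 := by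
        simpa [hlen, pi_ne_zero] using intervalIntegral_sq_le_of_integral_eq_zero hπ
          (fun s _ => hM s) hM'c.continuousOn hMper hMmean
    _ ≤ ∫ s in -π..π, 2 * π * ∫ t in -π..π, pderiv2 0 u ![s, t] ^ 2 :=
        intervalIntegral.integral_mono_on hπ.le ((hM'c.pow 2).intervalIntegrable _ _)
          (((continuous_intervalIntegral_vecCons (hd0.pow 2) _ _).intervalIntegrable _ _).const_mul
            _)
          fun s _ => hM'_le s

theorem setIntegral_Omega2_sq_le_sum_pderiv2_sq {u : Vec2 → ℝ} (hu : ContDiff ℝ 1 u)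
    (hper : Per2 u) (hmean : ∫ x in Omega2, u x = 0) :
    ∫ x in Omega2, u x ^ 2 ≤ ∫ x in Omega2, ∑ i, pderiv2 i u x ^ 2 := by
  have hπ : -π ≤ π := by linarith [pi_pos]
  have hint {g : Vec2 → ℝ} (hg : Continuous g) :
      IntervalIntegrable (fun s => ∫ t in -π..π, g ![s, t]) volume (-π) π :=
    (continuous_intervalIntegral_vecCons hg _ _).intervalIntegrable _ _
  have hu2 : Continuous fun x => u x ^ 2 := hu.continuous.pow 2
  have hd0 : Continuous fun x => pderiv2 0 u x ^ 2 := (hu.continuous_pderiv2 0).pow 2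
  have hd1 : Continuous fun x => pderiv2 1 u x ^ 2 := (hu.continuous_pderiv2 1).pow 2
  have hM2 : IntervalIntegrable (fun s => (∫ t in -π..π, u ![s, t]) ^ 2 / (2 * π)) volume (-π) π :=
    (((continuous_intervalIntegral_vecCons hu.continuous _ _).pow 2).div_const _).intervalIntegrable
      _ _
  simp only [Fin.sum_univ_two]
  rw [setIntegral_Omega2 hu2,
    setIntegral_Omega2 (g := fun x => pderiv2 0 u x ^ 2 + pderiv2 1 u x ^ 2) (hd0.add hd1)]
  calc ∫ s in -π..π, ∫ t in -π..π, u ![s, t] ^ 2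
      ≤ ∫ s in -π..π, ((∫ t in -π..π, pderiv2 1 u ![s, t] ^ 2) +
          (∫ t in -π..π, u ![s, t]) ^ 2 / (2 * π)) :=
        intervalIntegral.integral_mono_on hπ (hint hu2) ((hint hd1).add hM2)
          fun s _ => intervalIntegral_slice_sq_le hu hper s
    _ = (∫ s in -π..π, ∫ t in -π..π, pderiv2 1 u ![s, t] ^ 2) +
          (∫ s in -π..π, (∫ t in -π..π, u ![s, t]) ^ 2) / (2 * π) := by
        rw [intervalIntegral.integral_add (hint hd1) hM2, intervalIntegral.integral_div]
    _ ≤ (∫ s in -π..π, ∫ t in -π..π, pderiv2 1 u ![s, t] ^ 2) +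
          ∫ s in -π..π, ∫ t in -π..π, pderiv2 0 u ![s, t] ^ 2 := by
        gcongr
        rw [div_le_iff₀' two_pi_pos]
        exact intervalIntegral_sq_intervalIntegral_slice_le hu hper hmean
    _ = ∫ s in -π..π, ∫ t in -π..π, (pderiv2 0 u ![s, t] ^ 2 + pderiv2 1 u ![s, t] ^ 2) := by
        rw [add_comm, ← intervalIntegral.integral_add (hint hd0) (hint hd1)]
        refine intervalIntegral.integral_congr fun s _ => ?_
        exact (intervalIntegral.integral_add ((hd0.comp (by fun_prop)).intervalIntegrable _ _)
          ((hd1.comp (by fun_prop)).intervalIntegrable _ _)).symm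

lemma le_mul_exp_of_hasDerivAt_le_neg_mul {V V' : ℝ → ℝ} {c : ℝ}
    (hV : ∀ t, 0 ≤ t → HasDerivAt V (V' t) t) (hle : ∀ t, 0 ≤ t → V' t ≤ -c * V t) {t : ℝ}
    (ht : 0 ≤ t) : V t ≤ V 0 * exp (-c * t) := by
  have hW (r : ℝ) (hr : 0 ≤ r) :
      HasDerivAt (fun s => V s * exp (c * s)) ((V' r + c * V r) * exp (c * r)) r :=
    ((hV r hr).mul ((hasDerivAt_id' r).const_mul c).exp).congr_deriv (by ring)
  have hanti : AntitoneOn (fun r => V r * exp (c * r)) (Ici 0) := by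
    refine antitoneOn_of_hasDerivWithinAt_nonpos (f' := fun r => (V' r + c * V r) * exp (c * r))
      (convex_Ici 0) (fun r hr => (hW r hr).continuousAt.continuousWithinAt) (fun r hr => ?_)
      fun r hr => ?_
    · rw [interior_Ici] at hr
      exact (hW r hr.le).hasDerivWithinAt
    · rw [interior_Ici] at hr
      exact mul_nonpos_of_nonpos_of_nonneg (by linarith [hle r hr.le]) (exp_pos _).le
  have h0t := hanti self_mem_Ici ht ht
  simp only [mul_zero, exp_zero, mul_one] at h0t
  rw [neg_mul, exp_neg, ← div_eq_mul_inv, le_div_iff₀ (exp_pos _)]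
  exact h0t

lemma neg_mul_setIntegral_sq_le_setIntegral_sq_mul {α : Type*} [MeasurableSpace α]
    {μ : Measure α} {s : Set α} (hs : MeasurableSet s) {f G : α → ℝ} {C : ℝ}
    (hf : IntegrableOn (fun x => f x ^ 2) s μ) (hfG : IntegrableOn (fun x => f x ^ 2 * G x) s μ)
    (hG : ∀ x ∈ s, |G x| ≤ C) :
    -C * ∫ x in s, f x ^ 2 ∂μ ≤ ∫ x in s, f x ^ 2 * G x ∂μ := by
  rw [← integral_const_mul]
  refine setIntegral_mono_on (hf.const_mul _) hfG hs fun x hx => ?_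
  nlinarith [neg_abs_le (G x), hG x hx, sq_nonneg (f x)]

theorem gronwall_energy_decay_general
    (D : ℝ) (hD : 0 < D)
    (G : Vec2 → ℝ) (hGcont : Continuous G)
    (Gnorm : ℝ) (hGnorm : Gnorm = sSup ((fun x => |G x|) '' Omega2))
    (e : Vec2 → ℝ → ℝ)
    (hper : ∀ t : ℝ, Per2 (fun x => e x t))
    (hreg : ContDiff ℝ 1 (fun p : Vec2 × ℝ => e p.1 p.2))
    (hmean : ∀ t : ℝ, ∫ x in Omega2, e x t = 0)
    (hV' : ∀ t : ℝ,
      HasDerivAt (fun s => ∫ x in Omega2, (e x s) ^ 2)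
        (-(D * ∫ x in Omega2, (e x t) ^ 2 * G x)
          - 2 * D * ∫ x in Omega2, ∑ i, (pderiv2 i (fun y => e y t) x) ^ 2) t) :
    (∀ t : ℝ, 0 ≤ t →
      deriv (fun s => ∫ x in Omega2, (e x s) ^ 2) t
        ≤ -(D * (2 - Gnorm)) * ∫ x in Omega2, (e x t) ^ 2) ∧
    (∀ t : ℝ, 0 ≤ t →
      (∫ x in Omega2, (e x t) ^ 2)
        ≤ (∫ x in Omega2, (e x 0) ^ 2) * Real.exp (-(D * (2 - Gnorm)) * t)) := by
  have hΩ : IsCompact Omega2 := isCompact_Icc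
  have hG (x : Vec2) (hx : x ∈ Omega2) : |G x| ≤ Gnorm :=
    hGnorm ▸ le_csSup (hΩ.image (continuous_abs.comp hGcont)).bddAbove ⟨x, hx, rfl⟩
  have hdecay (t : ℝ) : deriv (fun s => ∫ x in Omega2, (e x s) ^ 2) t
      ≤ -(D * (2 - Gnorm)) * ∫ x in Omega2, (e x t) ^ 2 := by
    have hu : ContDiff ℝ 1 (fun x => e x t) := hreg.comp (contDiff_id.prodMk contDiff_const)
    have hpotential := neg_mul_setIntegral_sq_le_setIntegral_sq_mul (μ := volume) (s := Omega2)
      measurableSet_Icc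
      ((hu.continuous.pow 2).continuousOn.integrableOn_compact hΩ)
      (((hu.continuous.pow 2).mul hGcont).continuousOn.integrableOn_compact hΩ) hG
    have hpoincare := setIntegral_Omega2_sq_le_sum_pderiv2_sq hu (hper t) (hmean t)
    rw [(hV' t).deriv]
    nlinarith [mul_le_mul_of_nonneg_left hpotential hD.le,
      mul_le_mul_of_nonneg_left hpoincare hD.le]
  exact ⟨fun t _ => hdecay t, fun t ht => le_mul_exp_of_hasDerivAt_le_neg_mul
    (fun s _ => (hV' s).differentiableAt.hasDerivAt) (fun s _ => hdecay s) ht⟩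

/-- Grönwall step of the targets' stability theorem.
If `‖G‖_∞ < 2`, `e(·,t)` is `2π`-periodic with zero mean, and the energy
`V(t) = ∫_Ω e(x,t)² dx` satisfies `V'(t) = -D ∫_Ω e² G - 2D ∫_Ω ‖∇e‖²`, then
`V'(t) ≤ -D(2-‖G‖_∞) V(t)` and `V(t) ≤ V(0) e^{-D(2-‖G‖_∞)t}` for `t ≥ 0`. -/
theorem gronwall_energy_decay
    (D : ℝ) (hD : 0 < D)
    (G : Vec2 → ℝ) (hGcont : Continuous G) (hGper : Per2 G)
    (Gnorm : ℝ) (hGnorm : Gnorm = sSup ((fun x => |G x|) '' Omega2))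
    (hGlt : Gnorm < 2)
    (e : Vec2 → ℝ → ℝ)
    (hper : ∀ t : ℝ, Per2 (fun x => e x t))
    (hreg : ContDiff ℝ 1 (fun p : Vec2 × ℝ => e p.1 p.2))
    (hmean : ∀ t : ℝ, ∫ x in Omega2, e x t = 0)
    (hV' : ∀ t : ℝ,
      HasDerivAt (fun s => ∫ x in Omega2, (e x s) ^ 2)
        (-(D * ∫ x in Omega2, (e x t) ^ 2 * G x)
          - 2 * D * ∫ x in Omega2, ∑ i, (pderiv2 i (fun y => e y t) x) ^ 2) t) :
    (∀ t : ℝ, 0 ≤ t →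
      deriv (fun s => ∫ x in Omega2, (e x s) ^ 2) t
        ≤ -(D * (2 - Gnorm)) * ∫ x in Omega2, (e x t) ^ 2) ∧
    (∀ t : ℝ, 0 ≤ t →
      (∫ x in Omega2, (e x t) ^ 2)
        ≤ (∫ x in Omega2, (e x 0) ^ 2) * Real.exp (-(D * (2 - Gnorm)) * t)) :=
  gronwall_energy_decay_general D hD G hGcont Gnorm hGnorm e hper hreg hmean hV'
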